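/- arXiv:2004.00315 — 4 statements merged into one kernel-verified Lean document; each statement's English description precedes it below -/
import Mathlib

section
/- For every novel class n ∈ N, the set function g_n : 2^{B_u} → ℝ defined by g_n(U) = M^K(n, B_s ∪ U) is monotone non-decreasing and submodular on the subsets of B_u. -/
/-!
With nonnegative weights, `topKSum w K A` is the largest weight of a subset of `A` with at most
`K` elements: the weighted rank function of the uniform matroid of rank `K`. Monotonicity is then
immediate. For submodularity, take optimal `X ⊆ A ∪ B` and `Y ⊆ A ∩ B`; the multiset `X + Y` can be
redistributed into `S ⊆ A` and `T ⊆ B` with at most `K` elements each, so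
`topKSum (A ∩ B) + topKSum (A ∪ B) = w(X) + w(Y) = w(S) + w(T) ≤ topKSum A + topKSum B`.
-/

/-- The max-K-sum `M^K(A)`: the sum of the `K` largest values of `w` over the
finite set `A` (the sum of all of them if `|A| < K`). -/
noncomputable def topKSum {α : Type*} (w : α → ℝ) (K : ℕ) (A : Finset α) : ℝ :=
  (((A.val.map w).sort (· ≥ ·)).take K).sum

open Finset

theorem List.Pairwise.multiset_sum_le_sum_take {M : Type*} [AddCommMonoid M] [PartialOrder M]
    [IsOrderedAddMonoid M] {l : List M} (hl : l.Pairwise (· ≥ ·)) (h0 : ∀ x ∈ l, 0 ≤ x)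
    {K : ℕ} {t : Multiset M} (ht : t ≤ l) (hK : Multiset.card t ≤ K) :
    t.sum ≤ (l.take K).sum := by
  classical
  induction l generalizing K t with
  | nil => simp [Multiset.le_zero.mp ht]
  | cons a l ih =>
    rcases Multiset.empty_or_exists_mem t with rfl | ⟨c, hc⟩
    · simpa using List.sum_nonneg fun x hx => h0 x (List.mem_of_mem_take hx)
    obtain ⟨k, rfl⟩ : ∃ k, K = k + 1 :=
      Nat.exists_eq_add_one.mpr ((Multiset.card_pos_iff_exists_mem.mpr ⟨c, hc⟩).trans_le hK)
    obtain ⟨b, hb, hba, hle⟩ : ∃ b ∈ t, b ≤ a ∧ t.erase b ≤ l := by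
      by_cases hat : a ∈ t
      · exact ⟨a, hat, le_rfl, by simpa using Multiset.erase_le_erase a ht⟩
      · have htl : t ≤ l := (Multiset.le_cons_of_notMem hat).mp (by simpa using ht)
        exact ⟨c, hc, List.rel_of_pairwise_cons hl (Multiset.mem_of_le htl hc),
          (Multiset.erase_le c t).trans htl⟩
    have hcard : Multiset.card (t.erase b) ≤ k := by
      rw [Multiset.card_erase_of_mem hb, Nat.pred_eq_sub_one]; omega
    calc t.sum = b + (t.erase b).sum := (Multiset.sum_erase hb).symm
      _ ≤ a + (l.take k).sum :=
        add_le_add hba (ih hl.of_cons (fun x hx => h0 x (List.mem_cons_of_mem a hx)) hle hcard)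
      _ = ((a :: l).take (k + 1)).sum := by simp

theorem Multiset.exists_le_map_eq_of_le_map {α β : Type*} {f : α → β} {s : Multiset α}
    {t : Multiset β} (h : t ≤ s.map f) : ∃ u ≤ s, u.map f = t := by
  induction s using Quotient.inductionOn
  induction t using Quotient.inductionOn
  obtain ⟨l, hperm, hsub⟩ := h
  obtain ⟨l', hsub', rfl⟩ := List.sublist_map_iff.mp hsub
  exact ⟨l', hsub'.subperm, Quotient.sound hperm⟩

theorem Finset.exists_subset_subset_card_le_union_eq_inter_eq {α : Type*} [DecidableEq α]
    {A B X Y : Finset α} {K : ℕ} (hX : X ⊆ A ∪ B) (hY : Y ⊆ A ∩ B) (hXK : #X ≤ K) (hYK : #Y ≤ K) :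
    ∃ S ⊆ A, ∃ T ⊆ B, #S ≤ K ∧ #T ≤ K ∧ S ∪ T = X ∪ Y ∧ S ∩ T = X ∩ Y := by
  have hYA : Y ⊆ A := hY.trans inter_subset_left
  have hforced : #((X ∪ Y) \ A) + #(X ∩ Y) ≤ K := by
    rw [← card_union_of_disjoint
      (disjoint_sdiff_self_left.mono_right (inter_subset_right.trans hYA))]
    exact (card_le_card (union_subset (fun x hx => by grind) inter_subset_left)).trans hXK
  have hroom : #X + #Y - K ≤ #((X ∪ Y) ∩ A) := by
    have := card_union_add_card_inter X Y
    have := card_inter_add_card_sdiff (X ∪ Y) A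
    omega
  -- `S` must contain `X ∩ A`, whose points need not lie in `B`; `T` receives the rest of `X ∪ Y`
  -- and a second copy of `X ∩ Y`. The size of `S` is chosen so that both have at most `K` points.
  have hXA : X ∩ A ⊆ (X ∪ Y) ∩ A := inter_subset_inter_right subset_union_left
  obtain ⟨S, hXS, hSXY, hS⟩ := exists_subsuperset_card_eq hXA (le_max_left _ (#X + #Y - K))
    (max_le (card_le_card hXA) hroom)
  set T := (X ∪ Y) \ S ∪ (X ∩ Y)
  have hunion : S ∪ T = X ∪ Y := by grind
  have hinter : S ∩ T = X ∩ Y := by grind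
  have hSK : #S ≤ K := hS ▸ max_le ((card_le_card inter_subset_left).trans hXK) (by omega)
  have hST := card_union_add_card_inter S T
  rw [hunion, hinter, card_union_add_card_inter] at hST
  exact ⟨S, hSXY.trans inter_subset_right, T, by grind, hSK, by omega, hunion, hinter⟩

section topKSum

variable {α : Type*} (w : α → ℝ) (K : ℕ)

theorem exists_subset_card_le_sum_eq_topKSum (A : Finset α) :
    ∃ X ⊆ A, #X ≤ K ∧ ∑ x ∈ X, w x = topKSum w K A := by
  have hle : (((A.val.map w).sort (· ≥ ·)).take K : Multiset ℝ) ≤ A.val.map w := by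
    conv_rhs => rw [← Multiset.sort_eq (A.val.map w) (· ≥ ·)]
    exact Multiset.coe_le.mpr (List.take_sublist K _).subperm
  obtain ⟨u, hu, hmap⟩ := Multiset.exists_le_map_eq_of_le_map hle
  refine ⟨⟨u, Multiset.nodup_of_le hu A.nodup⟩, val_le_iff.mp hu, ?_, ?_⟩
  · have := congrArg Multiset.card hmap
    simp only [Multiset.card_map, Multiset.coe_card, List.length_take] at this
    exact (card_mk ..).trans_le (this.trans_le (min_le_left _ _))
  · rw [sum_eq_multiset_sum]
    exact congrArg Multiset.sum hmap

variable {w K}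

theorem sum_le_topKSum {A X : Finset α} (h0 : ∀ b ∈ A, 0 ≤ w b) (hXA : X ⊆ A) (hX : #X ≤ K) :
    ∑ x ∈ X, w x ≤ topKSum w K A := by
  have hsort := Multiset.sort_eq (A.val.map w) (· ≥ ·)
  refine List.Pairwise.multiset_sum_le_sum_take (Multiset.pairwise_sort _ _) ?_ ?_ ?_
  · intro x hx
    obtain ⟨b, hb, rfl⟩ := Multiset.mem_map.mp (hsort ▸ Multiset.mem_coe.mpr hx)
    exact h0 b hb
  · rw [hsort]
    exact Multiset.map_le_map (val_le_iff.mpr hXA)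
  · simpa using hX

theorem topKSum_mono {A B : Finset α} (h0 : ∀ b ∈ B, 0 ≤ w b) (hAB : A ⊆ B) :
    topKSum w K A ≤ topKSum w K B := by
  obtain ⟨X, hXA, hX, hsum⟩ := exists_subset_card_le_sum_eq_topKSum w K A
  exact hsum ▸ sum_le_topKSum h0 (hXA.trans hAB) hX

theorem topKSum_inter_add_topKSum_union_le [DecidableEq α] {A B : Finset α}
    (h0 : ∀ b ∈ A ∪ B, 0 ≤ w b) :
    topKSum w K (A ∩ B) + topKSum w K (A ∪ B) ≤ topKSum w K A + topKSum w K B := by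
  obtain ⟨Y, hY, hYK, hYsum⟩ := exists_subset_card_le_sum_eq_topKSum w K (A ∩ B)
  obtain ⟨X, hX, hXK, hXsum⟩ := exists_subset_card_le_sum_eq_topKSum w K (A ∪ B)
  obtain ⟨S, hSA, T, hTB, hSK, hTK, hunion, hinter⟩ :=
    exists_subset_subset_card_le_union_eq_inter_eq hX hY hXK hYK
  calc topKSum w K (A ∩ B) + topKSum w K (A ∪ B)
      = ∑ x ∈ X ∪ Y, w x + ∑ x ∈ X ∩ Y, w x := by rw [sum_union_inter, ← hXsum, ← hYsum, add_comm]
    _ = ∑ x ∈ S, w x + ∑ x ∈ T, w x := by rw [← hunion, ← hinter, sum_union_inter]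
    _ ≤ topKSum w K A + topKSum w K B :=
      add_le_add (sum_le_topKSum (fun b hb => h0 b (subset_union_left hb)) hSA hSK)
        (sum_le_topKSum (fun b hb => h0 b (subset_union_right hb)) hTB hTK)

end topKSum

theorem similarity_topK_monotone_submodular_general {β ν : Type*} [DecidableEq β]
    (Bu Bs : Finset β) (N : Finset ν) (f : ν → β → ℝ) (K : ℕ)
    (hf : ∀ n ∈ N, ∀ b ∈ Bs ∪ Bu, 0 ≤ f n b) :
    ∀ n ∈ N,
      (∀ A B : Finset β, A ⊆ Bu → B ⊆ Bu → A ⊆ B →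
        topKSum (f n) K (Bs ∪ A) ≤ topKSum (f n) K (Bs ∪ B)) ∧
      (∀ A B : Finset β, A ⊆ Bu → B ⊆ Bu →
        topKSum (f n) K (Bs ∪ (A ∩ B)) + topKSum (f n) K (Bs ∪ (A ∪ B)) ≤
          topKSum (f n) K (Bs ∪ A) + topKSum (f n) K (Bs ∪ B)) := by
  intro n hn
  have h0 : ∀ U ⊆ Bu, ∀ b ∈ Bs ∪ U, 0 ≤ f n b := fun U hU b hb =>
    hf n hn b (union_subset_union_right hU hb)
  refine ⟨fun A B _ hB hAB => topKSum_mono (h0 B hB) (union_subset_union_right hAB),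
    fun A B hA hB => ?_⟩
  rw [union_inter_distrib_left, union_union_distrib_left]
  refine topKSum_inter_add_topKSum_union_le fun b hb => ?_
  rw [← union_union_distrib_left] at hb
  exact h0 (A ∪ B) (union_subset hA hB) b hb

/-- For every novel class `n ∈ N`, the set function `g_n(U) = M^K(n, B_s ∪ U)` is
monotone non-decreasing and submodular on the subsets of `B_u`. -/
theorem similarity_topK_monotone_submodular {β ν : Type*} [DecidableEq β]
    (Bu Bs : Finset β) (N : Finset ν) (f : ν → β → ℝ) (K : ℕ)
    (hBu : Bu.Nonempty) (hN : N.Nonempty) (hdisj : Disjoint Bs Bu) (hK : 1 ≤ K)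
    (hf : ∀ n ∈ N, ∀ b ∈ Bs ∪ Bu, 0 ≤ f n b) :
    ∀ n ∈ N,
      (∀ A B : Finset β, A ⊆ Bu → B ⊆ Bu → A ⊆ B →
        topKSum (f n) K (Bs ∪ A) ≤ topKSum (f n) K (Bs ∪ B)) ∧
      (∀ A B : Finset β, A ⊆ Bu → B ⊆ Bu →
        topKSum (f n) K (Bs ∪ (A ∩ B)) + topKSum (f n) K (Bs ∪ (A ∪ B)) ≤
          topKSum (f n) K (Bs ∪ A) + topKSum (f n) K (Bs ∪ B)) :=
  similarity_topK_monotone_submodular_general Bu Bs N f K hf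
end

section
/- Suppose λ = 0 and B_s = ∅, so h(U) = (1/(|N|·K)) Σ_{n∈N} M^K(n,U) for U ⊆ B_u. Then h is a normalized (h(∅) = 0), monotone non-decreasing, submodular set function on the subsets of B_u; hence the base-class selection problem max{ h(U) : U ⊆ B_u, |U| = m } is a submodular monotone non-decreasing maximization with exact cardinality constraint. -/
/-- The selection objective
`h(U) = (1/(|N|·K)) Σ_{n∈N} M^K(n, B_s ∪ U) − (λ/(|N|·(|B_s|+m))) Σ_{n∈N} Σ_{u∈B_s∪U} f(n,u)`. -/
noncomputable def selObj {β ν : Type*} [DecidableEq β]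
    (N : Finset ν) (f : ν → β → ℝ) (K : ℕ) (Bs : Finset β) (lam : ℝ) (m : ℕ)
    (U : Finset β) : ℝ :=
  (1 / ((N.card : ℝ) * (K : ℝ))) * ∑ n ∈ N, topKSum (f n) K (Bs ∪ U)
    - (lam / ((N.card : ℝ) * ((Bs.card : ℝ) + (m : ℝ)))) * ∑ n ∈ N, ∑ u ∈ Bs ∪ U, f n u

theorem List.sum_take_le_sum_take_of_sublist {l₁ l₂ : List ℝ} (h : l₁.Sublist l₂)
    (hsorted : l₂.Pairwise (· ≥ ·)) (hnonneg : ∀ x ∈ l₂, 0 ≤ x) (K : ℕ) :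
    (l₁.take K).sum ≤ (l₂.take K).sum := by
  induction h generalizing K with
  | slnil => simp
  | @cons l₁ l₂ a _ ih =>
    rw [List.pairwise_cons] at hsorted
    have hnonneg' := fun x hx => hnonneg x (List.mem_cons_of_mem a hx)
    cases K with
    | zero => simp
    | succ k =>
      have hstep : (l₂.take (k + 1)).sum ≤ a + (l₂.take k).sum := by
        by_cases hk : k < l₂.length
        · rw [List.sum_take_succ l₂ k hk]
          linarith [hsorted.1 _ (l₂.getElem_mem hk)]
        · rw [List.take_of_length_le (by omega), List.take_of_length_le (by omega)]
          linarith [hnonneg a List.mem_cons_self]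
      calc (l₁.take (k + 1)).sum ≤ (l₂.take (k + 1)).sum := ih hsorted.2 hnonneg' _
        _ ≤ a + (l₂.take k).sum := hstep
        _ = ((a :: l₂).take (k + 1)).sum := by simp
  | @cons_cons l₁ l₂ a _ ih =>
    rw [List.pairwise_cons] at hsorted
    cases K with
    | zero => simp
    | succ k =>
      simpa using ih hsorted.2 (fun x hx => hnonneg x (List.mem_cons_of_mem a hx)) k

open Finset

section

variable {α : Type*}

def maxSubsetSum (w : α → ℝ) (K : ℕ) (A : Finset α) : ℝ :=
  ({S ∈ A.powerset | S.card ≤ K} : Finset (Finset α)).sup' ⟨∅, by simp⟩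
    (fun S => ∑ a ∈ S, w a)

variable (w : α → ℝ) (K : ℕ)

theorem sum_le_maxSubsetSum {A S : Finset α} (hS : S ⊆ A) (hSK : S.card ≤ K) :
    ∑ a ∈ S, w a ≤ maxSubsetSum w K A :=
  le_sup' (fun S => ∑ a ∈ S, w a) (by simp [hS, hSK])

theorem exists_sum_eq_maxSubsetSum (A : Finset α) :
    ∃ S ⊆ A, S.card ≤ K ∧ ∑ a ∈ S, w a = maxSubsetSum w K A := by
  obtain ⟨S, hS, hval⟩ := exists_mem_eq_sup' (s := {S ∈ A.powerset | S.card ≤ K})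
    ⟨∅, by simp⟩ (fun S => ∑ a ∈ S, w a)
  rw [mem_filter, mem_powerset] at hS
  exact ⟨S, hS.1, hS.2, hval.symm⟩

theorem maxSubsetSum_mono {A B : Finset α} (h : A ⊆ B) :
    maxSubsetSum w K A ≤ maxSubsetSum w K B := by
  obtain ⟨S, hSA, hSK, hS⟩ := exists_sum_eq_maxSubsetSum w K A
  exact hS ▸ sum_le_maxSubsetSum w K (hSA.trans h) hSK

theorem exists_sum_eq_topKSum (A : Finset α) :
    ∃ S ⊆ A, S.card ≤ K ∧ ∑ a ∈ S, w a = topKSum w K A := by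
  classical
  set L := (A.val.map w).sort (· ≥ ·)
  have hperm : L.Perm (A.toList.map w) := by
    rw [← Multiset.coe_eq_coe, ← Multiset.map_coe, coe_toList, Multiset.sort_eq]
  obtain ⟨l, hl, hsub⟩ := ((L.take_sublist K).subperm.trans hperm.subperm)
  obtain ⟨l', hl', rfl⟩ := List.sublist_map_iff.mp hsub
  have hnodup : l'.Nodup := hl'.nodup A.nodup_toList
  refine ⟨l'.toFinset, fun a ha => by simpa using hl'.subset (List.mem_toFinset.mp ha), ?_, ?_⟩
  · rw [List.toFinset_card_of_nodup hnodup, ← List.length_map (f := w), hl.length_eq]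
    exact L.length_take_le K
  · rw [List.sum_toFinset w hnodup, hl.sum_eq]
    rfl

theorem sum_le_topKSum_s2 {A S : Finset α} (hw : ∀ a ∈ A, 0 ≤ w a) (hSA : S ⊆ A)
    (hSK : S.card ≤ K) : ∑ a ∈ S, w a ≤ topKSum w K A := by
  set L := (A.val.map w).sort (· ≥ ·)
  set L' := (S.val.map w).sort (· ≥ ·)
  have hL : (L : Multiset ℝ) = A.val.map w := Multiset.sort_eq _ _
  have hL' : (L' : Multiset ℝ) = S.val.map w := Multiset.sort_eq _ _
  have hsub : L'.Sublist L := by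
    refine List.sublist_of_subperm_of_pairwise ?_ (Multiset.pairwise_sort _ _)
      (Multiset.pairwise_sort _ _)
    rw [← Multiset.coe_le, hL, hL']
    exact Multiset.map_le_map (val_le_iff.mpr hSA)
  have hnonneg : ∀ x ∈ L, 0 ≤ x := by
    intro x hx
    obtain ⟨a, ha, rfl⟩ := Multiset.mem_map.mp (hL ▸ Multiset.mem_coe.mpr hx)
    exact hw a ha
  have hlen : L'.length ≤ K := by
    rw [Multiset.length_sort, Multiset.card_map]
    exact hSK
  calc ∑ a ∈ S, w a = (L'.take K).sum := by
        rw [List.take_of_length_le hlen, sum_eq_multiset_sum, ← hL', Multiset.sum_coe]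
    _ ≤ topKSum w K A :=
        List.sum_take_le_sum_take_of_sublist hsub (Multiset.pairwise_sort _ _) hnonneg K

theorem topKSum_eq_maxSubsetSum {A : Finset α} (hw : ∀ a ∈ A, 0 ≤ w a) :
    topKSum w K A = maxSubsetSum w K A := by
  obtain ⟨S, hSA, hSK, hS⟩ := exists_sum_eq_topKSum w K A
  obtain ⟨T, hTA, hTK, hT⟩ := exists_sum_eq_maxSubsetSum w K A
  exact le_antisymm (hS ▸ sum_le_maxSubsetSum w K hSA hSK) (hT ▸ sum_le_topKSum_s2 w K hw hTA hTK)

variable [DecidableEq α]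

/-- `x` joins `T` if `T` has room; otherwise it displaces some `t ∈ T \ S`, which joins `S`. -/
theorem add_sum_add_sum_le_maxSubsetSum {C D S T : Finset α} {x : α} (hCD : C ⊆ D)
    (hxC : x ∉ C) (hSD : S ⊆ D) (hSK : S.card < K) (hTC : T ⊆ C) (hTK : T.card ≤ K) :
    w x + ∑ a ∈ S, w a + ∑ a ∈ T, w a ≤
      maxSubsetSum w K (insert x C) + maxSubsetSum w K D := by
  have hxT : x ∉ T := fun h => hxC (hTC h)
  have hS := sum_le_maxSubsetSum w K hSD hSK.le
  rcases hTK.lt_or_eq with hTK | hTK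
  · have hxT' := sum_le_maxSubsetSum w K (insert_subset_insert x hTC)
      (by rw [card_insert_of_notMem hxT]; omega)
    rw [sum_insert hxT] at hxT'
    linarith
  · obtain ⟨t, htT, htS⟩ :=
      not_subset.mp fun h : T ⊆ S => (card_le_card h).not_gt (hTK ▸ hSK)
    have hxT' : x ∉ T.erase t := fun h => hxT (mem_of_mem_erase h)
    have hT := sum_le_maxSubsetSum w K (insert_subset_insert x ((erase_subset t T).trans hTC))
      (by rw [card_insert_of_notMem hxT', card_erase_of_mem htT]; omega)
    have hS' := sum_le_maxSubsetSum w K (insert_subset (hCD (hTC htT)) hSD)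
      (by rw [card_insert_of_notMem htS]; omega)
    rw [sum_insert hxT'] at hT
    rw [sum_insert htS] at hS'
    linarith [add_sum_erase T w htT]

theorem maxSubsetSum_insert_add_le {C D : Finset α} {x : α} (hCD : C ⊆ D) (hxD : x ∉ D) :
    maxSubsetSum w K (insert x D) + maxSubsetSum w K C ≤
      maxSubsetSum w K (insert x C) + maxSubsetSum w K D := by
  obtain ⟨S, hSD, hSK, hS⟩ := exists_sum_eq_maxSubsetSum w K (insert x D)
  obtain ⟨T, hTC, hTK, hT⟩ := exists_sum_eq_maxSubsetSum w K C
  rw [← hS, ← hT]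
  by_cases hxS : x ∈ S
  · rw [← add_sum_erase S w hxS]
    refine add_sum_add_sum_le_maxSubsetSum w K hCD (fun h => hxD (hCD h)) ?_ ?_ hTC hTK
    · intro a ha
      exact (mem_insert.mp (hSD (mem_of_mem_erase ha))).resolve_left (ne_of_mem_erase ha)
    · rw [← card_erase_add_one hxS] at hSK
      omega
  · have hS' := sum_le_maxSubsetSum w K ((subset_insert_iff_of_notMem hxS).mp hSD) hSK
    linarith [hT ▸ maxSubsetSum_mono w K (subset_insert x C)]

theorem maxSubsetSum_union_add_le {C D : Finset α} (hCD : C ⊆ D) {E : Finset α}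
    (hDE : Disjoint D E) :
    maxSubsetSum w K (D ∪ E) + maxSubsetSum w K C ≤
      maxSubsetSum w K (C ∪ E) + maxSubsetSum w K D := by
  induction E using Finset.induction_on with
  | empty => simp [add_comm]
  | @insert x E hxE ih =>
    rw [disjoint_insert_right] at hDE
    have hxDE : x ∉ D ∪ E := by simp [hDE.1, hxE]
    rw [union_insert, union_insert]
    linarith [ih hDE.2, maxSubsetSum_insert_add_le w K (union_subset_union_left hCD) hxDE]

theorem maxSubsetSum_inter_add_union_le (A B : Finset α) :
    maxSubsetSum w K (A ∩ B) + maxSubsetSum w K (A ∪ B) ≤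
      maxSubsetSum w K A + maxSubsetSum w K B := by
  have h := maxSubsetSum_union_add_le w K (inter_subset_right (s₁ := A))
    (disjoint_sdiff (s := B) (t := A))
  rw [union_sdiff_self_eq_union, union_comm B,
    show A ∩ B ∪ A \ B = A from sup_inf_sdiff A B] at h
  linarith

end

theorem selObj_lambda_zero_normalized_monotone_submodular_general {β ν : Type*} [DecidableEq β]
    (Bu : Finset β) (N : Finset ν) (f : ν → β → ℝ) (K m : ℕ)
    (hf : ∀ n ∈ N, ∀ b ∈ Bu, 0 ≤ f n b) :
    selObj N f K ∅ 0 m ∅ = 0 ∧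
    (∀ A B : Finset β, A ⊆ Bu → B ⊆ Bu → A ⊆ B →
      selObj N f K ∅ 0 m A ≤ selObj N f K ∅ 0 m B) ∧
    (∀ A B : Finset β, A ⊆ Bu → B ⊆ Bu →
      selObj N f K ∅ 0 m (A ∩ B) + selObj N f K ∅ 0 m (A ∪ B) ≤
        selObj N f K ∅ 0 m A + selObj N f K ∅ 0 m B) := by
  set c := 1 / ((N.card : ℝ) * (K : ℝ))
  have hc : 0 ≤ c := by positivity
  have hsel : ∀ U ⊆ Bu, selObj N f K ∅ 0 m U = c * ∑ n ∈ N, maxSubsetSum (f n) K U := by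
    intro U hU
    simp only [selObj, zero_div, zero_mul, sub_zero, empty_union]
    congr 1
    exact sum_congr rfl fun n hn => topKSum_eq_maxSubsetSum _ _ fun b hb => hf n hn b (hU hb)
  refine ⟨by simp [selObj, topKSum], fun A B hA hB hAB => ?_, fun A B hA hB => ?_⟩
  · rw [hsel A hA, hsel B hB]
    exact mul_le_mul_of_nonneg_left (sum_le_sum fun n _ => maxSubsetSum_mono _ _ hAB) hc
  · rw [hsel _ (inter_subset_left.trans hA), hsel _ (union_subset hA hB), hsel A hA, hsel B hB,
      ← mul_add, ← mul_add, ← sum_add_distrib, ← sum_add_distrib]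
    exact mul_le_mul_of_nonneg_left
      (sum_le_sum fun n _ => maxSubsetSum_inter_add_union_le _ _ A B) hc

/-- For `λ = 0` and `B_s = ∅` (so `h(U) = (1/(|N|·K)) Σ_{n∈N} M^K(n,U)`), the
selection objective `h` is normalized (`h(∅) = 0`), monotone non-decreasing and
submodular on the subsets of `B_u`. -/
theorem selObj_lambda_zero_normalized_monotone_submodular {β ν : Type*} [DecidableEq β]
    (Bu : Finset β) (N : Finset ν) (f : ν → β → ℝ) (K m : ℕ)
    (hBu : Bu.Nonempty) (hN : N.Nonempty) (hK : 1 ≤ K) (hm : 1 ≤ m)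
    (hf : ∀ n ∈ N, ∀ b ∈ Bu, 0 ≤ f n b) :
    selObj N f K ∅ 0 m ∅ = 0 ∧
    (∀ A B : Finset β, A ⊆ Bu → B ⊆ Bu → A ⊆ B →
      selObj N f K ∅ 0 m A ≤ selObj N f K ∅ 0 m B) ∧
    (∀ A B : Finset β, A ⊆ Bu → B ⊆ Bu →
      selObj N f K ∅ 0 m (A ∩ B) + selObj N f K ∅ 0 m (A ∪ B) ≤
        selObj N f K ∅ 0 m A + selObj N f K ∅ 0 m B) :=
  selObj_lambda_zero_normalized_monotone_submodular_general Bu N f K m hf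
end

section
/- Let F be the multilinear extension of the selection objective h. For each n ∈ N and each finite set A of base classes, let τ_K^n(A) denote the K-th largest value of f(n,·) over A if |A| ≥ K and τ_K^n(A) = 0 otherwise. Then for every x ∈ [0,1]^{B_u} and every u ∈ B_u, F(x ∨ u) − F(x ∧ (B_u − u)) = (1/(|N|·K)) Σ_{n∈N} Σ_{S ⊆ B_u\{u}} [ Π_{v∈S} x_v · Π_{v∈B_u\({u}∪S)} (1 − x_v) ] · max( f(n,u) − τ_K^n(S ∪ B_s), 0 ) − (λ/(|N|·(|B_s|+m))) Σ_{n∈N} f(n,u). Equivalently, the marginal contribution of u equals, for each novel class n, the expectation over a random set S (including each v ∈ B_u\{u} independently with probability x_v) of max(f(n,u) − τ_K^n(S ∪ B_s), 0), averaged over n and divided by K, minus the modular penalty term. -/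
/-- The K-th order statistic `τ_K(A)`: the K-th largest value of `w` over `A`
if `|A| ≥ K`, and `0` otherwise. -/
noncomputable def kthLargest {α : Type*} (w : α → ℝ) (K : ℕ) (A : Finset α) : ℝ :=
  ((A.val.map w).sort (· ≥ ·)).getD (K - 1) 0

/-- The multilinear extension of a set function `h` over the ground set `Bu`:
`F(x) = Σ_{S⊆Bu} h(S) Π_{v∈S} x_v Π_{v∈Bu\S} (1 − x_v)`. -/
noncomputable def multilinearExtOn {β : Type*} [DecidableEq β]
    (Bu : Finset β) (h : Finset β → ℝ) (x : β → ℝ) : ℝ :=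
  ∑ S ∈ Bu.powerset, h S * (∏ v ∈ S, x v) * ∏ v ∈ Bu \ S, (1 - x v)

theorem List.sum_take_succ_getD {M : Type*} [AddMonoid M] (l : List M) (j : ℕ) :
    (l.take (j + 1)).sum = (l.take j).sum + l.getD j 0 := by
  rcases lt_or_ge j l.length with h | h
  · rw [List.sum_take_succ l j h, List.getD_eq_getElem l 0 h]
  · rw [List.take_of_length_le h, List.take_of_length_le (by omega), List.getD_eq_default l 0 h,
      add_zero]

theorem List.getD_le_of_forall_le {M : Type*} [LinearOrder M] [Zero M] {l : List M} {a : M}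
    (hl : ∀ b ∈ l, b ≤ a) (ha : 0 ≤ a) (j : ℕ) : l.getD j 0 ≤ a := by
  rcases lt_or_ge j l.length with h | h
  · rw [List.getD_eq_getElem l 0 h]
    exact hl _ (List.getElem_mem h)
  · rwa [List.getD_eq_default l 0 h]

theorem List.sum_take_orderedInsert {M : Type*} [AddCommGroup M] [LinearOrder M]
    [IsOrderedAddMonoid M] {a : M} (ha : 0 ≤ a) {l : List M} (hl : l.Pairwise (· ≥ ·)) (K : ℕ) :
    ((l.orderedInsert (· ≥ ·) a).take (K + 1)).sum
      = (l.take (K + 1)).sum + max (a - l.getD K 0) 0 := by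
  induction l generalizing K with
  | nil => simp [max_eq_left ha]
  | cons b t ih =>
    rw [List.orderedInsert_cons]
    split_ifs with hab
    · have hle : (b :: t).getD K 0 ≤ a :=
        List.getD_le_of_forall_le (List.forall_mem_cons.2
          ⟨hab, fun c hc => (List.rel_of_pairwise_cons hl hc).trans hab⟩) ha K
      rw [max_eq_left (sub_nonneg.2 hle), List.take_succ_cons, List.sum_cons,
        List.sum_take_succ_getD]
      abel
    · cases K with
      | zero =>
        simp [max_eq_right (sub_nonpos.2 (not_le.1 hab).le)]
      | succ K =>
        rw [List.take_succ_cons, List.take_succ_cons, List.sum_cons, List.sum_cons,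
          ih hl.of_cons K, List.getD_cons_succ, add_assoc]

theorem Multiset.sort_cons_eq_orderedInsert {α : Type*} [LinearOrder α] (a : α)
    (s : Multiset α) :
    (a ::ₘ s).sort (· ≥ ·) = (s.sort (· ≥ ·)).orderedInsert (· ≥ ·) a := by
  have hperm : ((a ::ₘ s).sort (· ≥ ·)).Perm (a :: s.sort (· ≥ ·)) := by
    rw [← Multiset.coe_eq_coe, Multiset.sort_eq, ← Multiset.cons_coe, Multiset.sort_eq]
  exact List.Perm.eq_of_pairwise' (Multiset.pairwise_sort _ _)
    ((Multiset.pairwise_sort _ _).orderedInsert a _)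
    (hperm.trans (List.perm_orderedInsert _ a _).symm)

theorem topKSum_insert {α : Type*} [DecidableEq α] {w : α → ℝ} {K : ℕ} (hK : 1 ≤ K)
    {A : Finset α} {u : α} (hu : u ∉ A) (hwu : 0 ≤ w u) :
    topKSum w K (insert u A) = topKSum w K A + max (w u - kthLargest w K A) 0 := by
  obtain ⟨K, rfl⟩ := Nat.exists_eq_add_of_le' hK
  rw [topKSum, topKSum, kthLargest, Finset.insert_val_of_notMem hu, Multiset.map_cons,
    Multiset.sort_cons_eq_orderedInsert, Nat.add_sub_cancel]
  exact List.sum_take_orderedInsert hwu (Multiset.pairwise_sort _ _) K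

theorem Finset.prod_comp_update_of_notMem {ι α M : Type*} [DecidableEq ι] [CommMonoid M]
    {s : Finset ι} {i : ι} (hi : i ∉ s) (g : α → M) (x : ι → α) (t : α) :
    ∏ v ∈ s, g (Function.update x i t v) = ∏ v ∈ s, g (x v) :=
  Finset.prod_congr rfl fun _ hv => by rw [Function.update_of_ne (ne_of_mem_of_not_mem hv hi)]

theorem multilinearExtOn_insert_update {β : Type*} [DecidableEq β] {E : Finset β} {u : β}
    (hu : u ∉ E) (h : Finset β → ℝ) (x : β → ℝ) (t : ℝ) :
    multilinearExtOn (insert u E) h (Function.update x u t) =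
      ∑ S ∈ E.powerset, ((∏ v ∈ S, x v) * ∏ v ∈ E \ S, (1 - x v)) *
        (t * h (insert u S) + (1 - t) * h S) := by
  rw [multilinearExtOn, Finset.sum_powerset_insert hu, ← Finset.sum_add_distrib]
  refine Finset.sum_congr rfl fun S hS => ?_
  have huS : u ∉ S := fun h => hu (Finset.mem_powerset.1 hS h)
  have huES : u ∉ E \ S := fun h => hu (Finset.mem_sdiff.1 h).1
  rw [Finset.insert_sdiff_insert, Finset.sdiff_insert_of_notMem hu,
    Finset.insert_sdiff_of_notMem _ huS, Finset.prod_insert huS, Finset.prod_insert huES,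
    Function.update_self]
  simp only [Finset.prod_update_of_notMem huS,
    Finset.prod_comp_update_of_notMem huES (fun y : ℝ => 1 - y)]
  ring

theorem multilinearExtOn_update_one_sub_update_zero {β : Type*} [DecidableEq β]
    {E : Finset β} {u : β} (hu : u ∉ E) (h : Finset β → ℝ) (x : β → ℝ) :
    multilinearExtOn (insert u E) h (Function.update x u 1)
      - multilinearExtOn (insert u E) h (Function.update x u 0) =
      ∑ S ∈ E.powerset, ((∏ v ∈ S, x v) * ∏ v ∈ E \ S, (1 - x v)) * (h (insert u S) - h S) := by
  rw [multilinearExtOn_insert_update hu, multilinearExtOn_insert_update hu,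
    ← Finset.sum_sub_distrib]
  refine Finset.sum_congr rfl fun S _ => ?_
  ring

theorem Finset.sum_powerset_prod_mul_prod_one_sub {β R : Type*} [DecidableEq β] [CommRing R]
    (E : Finset β) (x : β → R) : ∑ S ∈ E.powerset, (∏ v ∈ S, x v) * ∏ v ∈ E \ S, (1 - x v) = 1 := by
  simp [← Finset.prod_add]

theorem selObj_insert_sub {β ν : Type*} [DecidableEq β] {N : Finset ν} {f : ν → β → ℝ}
    {K : ℕ} (hK : 1 ≤ K) (Bs : Finset β) (lam : ℝ) (m : ℕ) {S : Finset β} {u : β}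
    (hu : u ∉ Bs ∪ S) (hfu : ∀ n ∈ N, 0 ≤ f n u) :
    selObj N f K Bs lam m (insert u S) - selObj N f K Bs lam m S =
      (1 / ((N.card : ℝ) * (K : ℝ))) * ∑ n ∈ N, max (f n u - kthLargest (f n) K (S ∪ Bs)) 0
        - (lam / ((N.card : ℝ) * ((Bs.card : ℝ) + (m : ℝ)))) * ∑ n ∈ N, f n u := by
  have htop : ∀ n ∈ N, topKSum (f n) K (Bs ∪ insert u S) =
      topKSum (f n) K (Bs ∪ S) + max (f n u - kthLargest (f n) K (S ∪ Bs)) 0 := fun n hn => by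
    rw [Finset.union_insert, topKSum_insert hK hu (hfu n hn), Finset.union_comm S]
  have hpen : ∀ n ∈ N, ∑ v ∈ Bs ∪ insert u S, f n v = ∑ v ∈ Bs ∪ S, f n v + f n u :=
    fun n _ => by rw [Finset.union_insert, Finset.sum_insert hu, add_comm]
  rw [selObj, selObj, Finset.sum_congr rfl htop, Finset.sum_congr rfl hpen,
    Finset.sum_add_distrib, Finset.sum_add_distrib]
  ring

theorem multilinearExt_marginal_formula_general {β ν : Type*} [DecidableEq β]
    (Bu Bs : Finset β) (N : Finset ν) (f : ν → β → ℝ) (K m : ℕ) (lam : ℝ)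
    (hdisj : Disjoint Bs Bu) (hK : 1 ≤ K)
    (hf : ∀ n ∈ N, ∀ b ∈ Bs ∪ Bu, 0 ≤ f n b)
    (x : β → ℝ) (u : β) (hu : u ∈ Bu) :
    multilinearExtOn Bu (selObj N f K Bs lam m) (Function.update x u 1)
      - multilinearExtOn Bu (selObj N f K Bs lam m) (Function.update x u 0) =
    (1 / ((N.card : ℝ) * (K : ℝ))) *
        ∑ n ∈ N, ∑ S ∈ (Bu.erase u).powerset,
          ((∏ v ∈ S, x v) * ∏ v ∈ (Bu.erase u) \ S, (1 - x v)) *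
            max (f n u - kthLargest (f n) K (S ∪ Bs)) 0
      - (lam / ((N.card : ℝ) * ((Bs.card : ℝ) + (m : ℝ)))) * ∑ n ∈ N, f n u := by
  set E := Bu.erase u
  have huE : u ∉ E := Finset.notMem_erase u Bu
  have hmarg : ∀ S ∈ E.powerset, selObj N f K Bs lam m (insert u S) - selObj N f K Bs lam m S =
      (1 / ((N.card : ℝ) * (K : ℝ))) * ∑ n ∈ N, max (f n u - kthLargest (f n) K (S ∪ Bs)) 0
        - (lam / ((N.card : ℝ) * ((Bs.card : ℝ) + (m : ℝ)))) * ∑ n ∈ N, f n u :=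
    fun S hS => selObj_insert_sub hK Bs lam m
      (Finset.notMem_union.2 ⟨Finset.disjoint_right.1 hdisj hu,
        fun h => huE (Finset.mem_powerset.1 hS h)⟩)
      (fun n hn => hf n hn u (Finset.mem_union_right _ hu))
  rw [← Finset.insert_erase hu, multilinearExtOn_update_one_sub_update_zero huE,
    Finset.sum_congr rfl fun S hS => congrArg _ (hmarg S hS)]
  simp_rw [mul_sub, Finset.sum_sub_distrib, ← Finset.sum_mul,
    Finset.sum_powerset_prod_mul_prod_one_sub, one_mul, Finset.mul_sum]
  rw [Finset.sum_comm]
  congr 1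
  exact Finset.sum_congr rfl fun _ _ => Finset.sum_congr rfl fun _ _ => by ring

/-- Marginal of the multilinear extension of the selection objective:
`F(x ∨ u) − F(x ∧ (B_u − u))` equals the expectation, over a random set `S`
including each `v ∈ B_u \ {u}` independently with probability `x_v`, of
`max(f(n,u) − τ_K^n(S ∪ B_s), 0)`, averaged over the novel classes `n` and
divided by `K`, minus the modular penalty term `(λ/(|N|·(|B_s|+m))) Σ_{n∈N} f(n,u)`. -/
theorem multilinearExt_marginal_formula {β ν : Type*} [DecidableEq β]
    (Bu Bs : Finset β) (N : Finset ν) (f : ν → β → ℝ) (K m : ℕ) (lam : ℝ)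
    (hBu : Bu.Nonempty) (hN : N.Nonempty) (hdisj : Disjoint Bs Bu)
    (hK : 1 ≤ K) (hm : 1 ≤ m) (hlam : 0 ≤ lam)
    (hf : ∀ n ∈ N, ∀ b ∈ Bs ∪ Bu, 0 ≤ f n b)
    (x : β → ℝ) (hx : ∀ v ∈ Bu, x v ∈ Set.Icc (0 : ℝ) 1) (u : β) (hu : u ∈ Bu) :
    multilinearExtOn Bu (selObj N f K Bs lam m) (Function.update x u 1)
      - multilinearExtOn Bu (selObj N f K Bs lam m) (Function.update x u 0) =
    (1 / ((N.card : ℝ) * (K : ℝ))) *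
        ∑ n ∈ N, ∑ S ∈ (Bu.erase u).powerset,
          ((∏ v ∈ S, x v) * ∏ v ∈ (Bu.erase u) \ S, (1 - x v)) *
            max (f n u - kthLargest (f n) K (S ∪ Bs)) 0
      - (lam / ((N.card : ℝ) * ((Bs.card : ℝ) + (m : ℝ)))) * ∑ n ∈ N, f n u :=
  multilinearExt_marginal_formula_general Bu Bs N f K m lam hdisj hK hf x u hu
end

section
/- Let r and m be real numbers with 0 < m ≤ 0.08·r. Then (1 − m/(e·r))/e ≥ (1 + r/(2·√((r − m)·m)))^{−1}; that is, in the regime m ≤ 0.08·r the approximation guarantee (1 − m/(e·r))/e of the random greedy algorithm is at least the approximation guarantee (1 + r/(2√((r−m)m)))^{−1} of the continuous double greedy algorithm. -/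
/-!
Both guarantees depend only on `t = m / r`. The continuous double greedy guarantee
`(1 + 1/(2√((1 - t) t)))⁻¹` increases on `(0, 1/2]` and the random greedy guarantee
`(1 - t/e)/e` decreases, so it suffices to compare them at `t = 0.08`, where they are
about `0.3517` and `0.3571`.
-/

open Real

noncomputable section

def randomGreedyRatio (t : ℝ) : ℝ := (1 - t / exp 1) / exp 1

def doubleGreedyRatio (t : ℝ) : ℝ := (1 + 1 / (2 * √((1 - t) * t)))⁻¹

end

lemma randomGreedyRatio_div (r m : ℝ) :
    randomGreedyRatio (m / r) = (1 - m / (exp 1 * r)) / exp 1 := by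
  rw [randomGreedyRatio, div_div, mul_comm r]

lemma doubleGreedyRatio_div {r : ℝ} (hr : 0 < r) (m : ℝ) :
    doubleGreedyRatio (m / r) = (1 + r / (2 * √((r - m) * m)))⁻¹ := by
  have hscale : (r - m) * m = ((1 - m / r) * (m / r)) * (r * r) := by
    field_simp
  rw [doubleGreedyRatio, hscale, sqrt_mul' _ (mul_self_nonneg r), sqrt_mul_self hr.le,
    ← mul_assoc, div_mul_cancel_right₀ hr.ne', one_div]

lemma randomGreedyRatio_antitone : Antitone randomGreedyRatio := fun s t hst => by
  unfold randomGreedyRatio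
  gcongr

lemma doubleGreedyRatio_monotoneOn : MonotoneOn doubleGreedyRatio (Set.Ioc 0 (1 / 2)) := by
  rintro s ⟨hs, -⟩ t ⟨-, ht⟩ hst
  have hprod : (1 - s) * s ≤ (1 - t) * t := by nlinarith
  have hpos : 0 < √((1 - s) * s) := sqrt_pos.mpr (by nlinarith)
  unfold doubleGreedyRatio
  gcongr

lemma doubleGreedyRatio_le_randomGreedyRatio_at_threshold :
    doubleGreedyRatio 0.08 ≤ randomGreedyRatio 0.08 := by
  have hsqrt : √((1 - 0.08) * 0.08 : ℝ) ≤ 0.2713 := (sqrt_le_left (by norm_num)).mpr (by norm_num)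
  have hpos : 0 < √((1 - 0.08) * 0.08 : ℝ) := sqrt_pos.mpr (by norm_num)
  have hdouble : doubleGreedyRatio 0.08 ≤ (1 + 1 / (2 * 0.2713))⁻¹ := by
    unfold doubleGreedyRatio
    gcongr
  -- `(1 - 0.08/x)/x ≥ 0.3518` holds for `x` between the roots of `0.3518 x² - x + 0.08`,
  -- which enclose `[2.7182818283, 2.7182818286]`.
  have hrandom : (0.3518 : ℝ) ≤ randomGreedyRatio 0.08 := by
    have hlo := exp_one_gt_d9
    have hhi := exp_one_lt_d9
    unfold randomGreedyRatio
    rw [le_div_iff₀ (by positivity), le_sub_iff_add_le, ← le_sub_iff_add_le', div_le_iff₀ (by positivity)]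
    nlinarith
  linarith [show (1 + 1 / (2 * 0.2713) : ℝ)⁻¹ ≤ 0.3518 by norm_num]

/-- In the regime `0 < m ≤ 0.08·r`, the approximation guarantee
`(1 − m/(e·r))/e` of the random greedy algorithm is at least the approximation
guarantee `(1 + r/(2√((r − m)·m)))⁻¹` of the continuous double greedy algorithm. -/
theorem random_greedy_beats_continuous_double_greedy (r m : ℝ)
    (hm : 0 < m) (hmr : m ≤ 0.08 * r) :
    (1 + r / (2 * Real.sqrt ((r - m) * m)))⁻¹ ≤ (1 - m / (Real.exp 1 * r)) / Real.exp 1 := by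
  have hr : 0 < r := by linarith
  have ht : m / r ≤ 0.08 := (div_le_iff₀ hr).mpr hmr
  have ht_mem : m / r ∈ Set.Ioc (0 : ℝ) (1 / 2) := ⟨div_pos hm hr, by linarith⟩
  rw [← doubleGreedyRatio_div hr, ← randomGreedyRatio_div r m]
  calc doubleGreedyRatio (m / r)
      ≤ doubleGreedyRatio 0.08 := doubleGreedyRatio_monotoneOn ht_mem ⟨by norm_num, by norm_num⟩ ht
    _ ≤ randomGreedyRatio 0.08 := doubleGreedyRatio_le_randomGreedyRatio_at_threshold
    _ ≤ randomGreedyRatio (m / r) := randomGreedyRatio_antitone ht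
end
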